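/- Let T \ge 0 be a compact operator on a separable Hilbert space with eigenvalue sequence \mu_n(T) (nonincreasing), and suppose (s-1)\sum_{n\ge0}\mu_n(T)^s \to 0 as s \to 1^+. Then (1/\log N)\sum_{n=0}^{N-1}\mu_n(T) \to 0 as N \to \infty; in particular, for any bounded sequence (f_n) with |f_n| \le M, (1/\log N)\sum_{n=0}^{N-1} f_n \mu_n(T) \to 0. -/

import Mathlib

/-!
Fix `N` and put `s = 1 + 1 / log N`. Splitting each term at the threshold `1 / N` gives
`μ n ≤ N ^ (s - 1) μ n ^ s + 1 / N`, and `N ^ (1 / log N) = e`, so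
`(1 / log N) ∑_{n<N} μ n ≤ e (s - 1) ∑' μ n ^ s + 1 / log N`.
As `N → ∞` we have `s → 1⁺`, so the right-hand side tends to `0` by hypothesis.
Bounded weights only multiply the bound by `M`.
-/

open Filter Topology Real Finset

lemma le_rpow_mul_rpow_one_sub_add {x t s : ℝ} (hx : 0 ≤ x) (ht : 0 < t) (hs : 1 ≤ s) :
    x ≤ x ^ s * t ^ (1 - s) + t := by
  rcases le_or_gt x t with hxt | htx
  · have : 0 ≤ x ^ s * t ^ (1 - s) := by positivity
    linarith
  · have hx₀ : 0 < x := ht.trans htx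
    calc x = x ^ s * x ^ (1 - s) := by rw [← rpow_add hx₀]; simp
      _ ≤ x ^ s * t ^ (1 - s) :=
        mul_le_mul_of_nonneg_left (rpow_le_rpow_of_nonpos ht htx.le (by linarith)) (by positivity)
      _ ≤ x ^ s * t ^ (1 - s) + t := le_add_of_nonneg_right ht.le

lemma sum_range_le_rpow_mul_sum_range_rpow_add_one {x : ℕ → ℝ} (hx : ∀ n, 0 ≤ x n) {N : ℕ}
    (hN : 0 < N) {s : ℝ} (hs : 1 ≤ s) :
    ∑ n ∈ range N, x n ≤ (N : ℝ) ^ (s - 1) * ∑ n ∈ range N, x n ^ s + 1 := by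
  have hN' : (0 : ℝ) < N := by exact_mod_cast hN
  calc ∑ n ∈ range N, x n
      ≤ ∑ n ∈ range N, (x n ^ s * (N : ℝ)⁻¹ ^ (1 - s) + (N : ℝ)⁻¹) :=
        sum_le_sum fun n _ => le_rpow_mul_rpow_one_sub_add (hx n) (inv_pos.2 hN') hs
    _ = (N : ℝ) ^ (s - 1) * ∑ n ∈ range N, x n ^ s + 1 := by
        rw [sum_add_distrib, ← sum_mul, sum_const, card_range, nsmul_eq_mul,
          mul_inv_cancel₀ hN'.ne', inv_rpow hN'.le, ← rpow_neg hN'.le, neg_sub, mul_comm]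

lemma inv_log_mul_sum_range_le {x : ℕ → ℝ} (hx : ∀ n, 0 ≤ x n) {N : ℕ} (hN : 0 < N)
    (hsum : Summable fun n => x n ^ (1 + (log N)⁻¹)) :
    (log N)⁻¹ * ∑ n ∈ range N, x n ≤
      exp 1 * ((log N)⁻¹ * ∑' n, x n ^ (1 + (log N)⁻¹)) + (log N)⁻¹ := by
  have hlog : 0 ≤ (log N)⁻¹ := inv_nonneg.2 (log_natCast_nonneg N)
  have hsplit := sum_range_le_rpow_mul_sum_range_rpow_add_one hx hN
    (s := 1 + (log N)⁻¹) (by linarith)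
  rw [add_sub_cancel_left] at hsplit
  have hpartial : ∑ n ∈ range N, x n ^ (1 + (log N)⁻¹) ≤ ∑' n, x n ^ (1 + (log N)⁻¹) :=
    hsum.sum_le_tsum _ fun n _ => rpow_nonneg (hx n) _
  have hbound : ∑ n ∈ range N, x n ≤ exp 1 * ∑' n, x n ^ (1 + (log N)⁻¹) + 1 :=
    hsplit.trans (add_le_add_left (mul_le_mul rpow_inv_log_le_exp_one hpartial
      (sum_nonneg fun n _ => rpow_nonneg (hx n) _) (exp_pos 1).le) 1)
  calc (log N)⁻¹ * ∑ n ∈ range N, x n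
      ≤ (log N)⁻¹ * (exp 1 * ∑' n, x n ^ (1 + (log N)⁻¹) + 1) :=
        mul_le_mul_of_nonneg_left hbound hlog
    _ = exp 1 * ((log N)⁻¹ * ∑' n, x n ^ (1 + (log N)⁻¹)) + (log N)⁻¹ := by ring

lemma tendsto_inv_log_natCast_atTop :
    Tendsto (fun N : ℕ => (log N)⁻¹) atTop (𝓝 0) :=
  (tendsto_log_atTop.comp tendsto_natCast_atTop_atTop).inv_tendsto_atTop

lemma tendsto_one_add_inv_log_natCast_atTop :
    Tendsto (fun N : ℕ => 1 + (log N)⁻¹) atTop (𝓝[>] 1) := by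
  refine tendsto_nhdsWithin_iff.2 ⟨by simpa using tendsto_inv_log_natCast_atTop.const_add 1, ?_⟩
  filter_upwards [(tendsto_log_atTop.comp tendsto_natCast_atTop_atTop).eventually_gt_atTop 0]
    with N hN
  simpa using hN

theorem tendsto_inv_log_mul_sum_range {x : ℕ → ℝ} (hx : ∀ n, 0 ≤ x n)
    (hsum : ∀ s : ℝ, 1 < s → Summable fun n => x n ^ s)
    (hlim : Tendsto (fun s : ℝ => (s - 1) * ∑' n, x n ^ s) (𝓝[>] 1) (𝓝 0)) :
    Tendsto (fun N : ℕ => (log N)⁻¹ * ∑ n ∈ range N, x n) atTop (𝓝 0) := by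
  have hs := tendsto_one_add_inv_log_natCast_atTop
  have hlim' := hlim.comp hs
  simp only [Function.comp_def, add_sub_cancel_left] at hlim'
  have hbound : ∀ᶠ N : ℕ in atTop, (log N)⁻¹ * ∑ n ∈ range N, x n ≤
      exp 1 * ((log N)⁻¹ * ∑' n, x n ^ (1 + (log N)⁻¹)) + (log N)⁻¹ := by
    filter_upwards [eventually_gt_atTop 0, hs eventually_mem_nhdsWithin] with N hN hs₁
    exact inv_log_mul_sum_range_le hx hN (hsum _ hs₁)
  refine squeeze_zero' (Eventually.of_forall fun N => ?_) hbound ?_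
  · exact mul_nonneg (inv_nonneg.2 (log_natCast_nonneg N)) (sum_nonneg fun n _ => hx n)
  · simpa using (hlim'.const_mul (exp 1)).add tendsto_inv_log_natCast_atTop

lemma abs_sum_mul_le_mul_sum {ι : Type*} (s : Finset ι) {f μ : ι → ℝ} {M : ℝ}
    (hμ : ∀ i, 0 ≤ μ i) (hf : ∀ i, |f i| ≤ M) :
    |∑ i ∈ s, f i * μ i| ≤ M * ∑ i ∈ s, μ i := by
  rw [mul_sum]
  refine (abs_sum_le_sum_abs _ _).trans (sum_le_sum fun i _ => ?_)
  rw [abs_mul, abs_of_nonneg (hμ i)]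
  exact mul_le_mul_of_nonneg_right (hf i) (hμ i)

lemma tendsto_mul_sum_range_mul_of_abs_le {c μ f : ℕ → ℝ} {M : ℝ} (hc : ∀ N, 0 ≤ c N)
    (hμ : ∀ n, 0 ≤ μ n) (hf : ∀ n, |f n| ≤ M)
    (h : Tendsto (fun N => c N * ∑ n ∈ range N, μ n) atTop (𝓝 0)) :
    Tendsto (fun N => c N * ∑ n ∈ range N, f n * μ n) atTop (𝓝 0) := by
  refine squeeze_zero_norm (fun N => ?_) (by simpa using h.const_mul M)
  rw [norm_mul, Real.norm_of_nonneg (hc N), Real.norm_eq_abs, mul_left_comm]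
  exact mul_le_mul_of_nonneg_left (abs_sum_mul_le_mul_sum _ hμ hf) (hc N)

theorem stmt17_general (μ : ℕ → ℝ) (hnonneg : ∀ n, 0 ≤ μ n)
    (hsum : ∀ s : ℝ, 1 < s → Summable (fun n : ℕ => (μ n) ^ s))
    (hlim : Tendsto (fun s : ℝ => (s - 1) * ∑' n : ℕ, (μ n) ^ s)
      (nhdsWithin 1 (Set.Ioi 1)) (nhds 0)) :
    Tendsto (fun N : ℕ => (1 / Real.log N) * ∑ n ∈ Finset.range N, μ n)
      atTop (nhds 0) ∧
    ∀ (M : ℝ) (f : ℕ → ℝ), (∀ n, |f n| ≤ M) →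
      Tendsto (fun N : ℕ => (1 / Real.log N) * ∑ n ∈ Finset.range N, f n * μ n)
        atTop (nhds 0) := by
  simp only [one_div]
  have hmean := tendsto_inv_log_mul_sum_range hnonneg hsum hlim
  exact ⟨hmean, fun M f hf => tendsto_mul_sum_range_mul_of_abs_le
    (fun N => inv_nonneg.2 (log_natCast_nonneg N)) hnonneg hf hmean⟩

theorem stmt17 (μ : ℕ → ℝ) (hnonneg : ∀ n, 0 ≤ μ n)
    (hmono : ∀ n, μ (n + 1) ≤ μ n)
    (hsum : ∀ s : ℝ, 1 < s → Summable (fun n : ℕ => (μ n) ^ s))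
    (hlim : Tendsto (fun s : ℝ => (s - 1) * ∑' n : ℕ, (μ n) ^ s)
      (nhdsWithin 1 (Set.Ioi 1)) (nhds 0)) :
    Tendsto (fun N : ℕ => (1 / Real.log N) * ∑ n ∈ Finset.range N, μ n)
      atTop (nhds 0) ∧
    ∀ (M : ℝ) (f : ℕ → ℝ), (∀ n, |f n| ≤ M) →
      Tendsto (fun N : ℕ => (1 / Real.log N) * ∑ n ∈ Finset.range N, f n * μ n)
        atTop (nhds 0) :=
  stmt17_general μ hnonneg hsum hlim
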